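/- arXiv:1609.02654 — 2 statements merged into one kernel-verified Lean document; each statement's English description precedes it below -/
import Mathlib

section
/- If λ_max(BA − D) < 0, then λ_max(BA) < max_{1≤i≤N} δ_i. -/
/-! With `s = √β`, conjugation by `diagonal s` carries `BA` and `BA − D` to the symmetric
matrices `T = sAs` and `T − D`, with the same eigenvalues. Stability therefore makes `D − T`
positive definite, and for an eigenvector `x` of `T` with eigenvalue `μ` this gives
`0 < xᵀ (D − T) x = ∑ᵢ (δᵢ − μ) xᵢ²`, so `μ < δᵢ` for some `i`. -/

open Matrix

namespace Matrix

variable {ι : Type*} [Fintype ι] [DecidableEq ι]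

theorem exists_eigenvector_iff_of_mul_eq_mul {R : Type*} [CommRing R] {M S P : Matrix ι ι R}
    (hP : IsUnit P) (hMP : M * P = P * S) (μ : R) :
    (∃ v, v ≠ 0 ∧ M *ᵥ v = μ • v) ↔ ∃ x, x ≠ 0 ∧ S *ᵥ x = μ • x := by
  have hinj := mulVec_injective_of_isUnit hP
  have heigen : ∀ x, M *ᵥ (P *ᵥ x) = μ • (P *ᵥ x) ↔ S *ᵥ x = μ • x := fun x => by
    rw [mulVec_mulVec, hMP, ← mulVec_mulVec, ← mulVec_smul, hinj.eq_iff]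
  constructor
  · rintro ⟨v, hv, hMv⟩
    obtain ⟨x, rfl⟩ := mulVec_surjective_iff_isUnit.mpr hP v
    exact ⟨x, by rintro rfl; simp at hv, (heigen x).mp hMv⟩
  · rintro ⟨x, hx, hSx⟩
    exact ⟨P *ᵥ x, by simpa using hinj.ne hx, (heigen x).mpr hSx⟩

theorem IsHermitian.posDef_neg_of_eigenvalues_neg {M : Matrix ι ι ℝ} (hM : M.IsHermitian)
    (hneg : ∀ μ : ℝ, (∃ v, v ≠ 0 ∧ M *ᵥ v = μ • v) → μ < 0) : (-M).PosDef := by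
  refine hM.neg.posDef_iff_eigenvalues_pos.mpr fun i =>
    neg_lt_zero.mp (hneg _ ⟨(hM.neg.eigenvectorBasis i).ofLp, ?_, ?_⟩)
  · exact fun h => hM.neg.eigenvectorBasis.orthonormal.ne_zero i (by ext j; exact congrFun h j)
  · have h := hM.neg.mulVec_eigenvectorBasis i
    rw [neg_mulVec] at h
    rw [neg_smul, ← h, neg_neg]

theorem exists_lt_of_posDef_diagonal_sub {T : Matrix ι ι ℝ} {δ : ι → ℝ}
    (hpd : (diagonal δ - T).PosDef) {μ : ℝ} {x : ι → ℝ} (hx : x ≠ 0) (hTx : T *ᵥ x = μ • x) :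
    ∃ i, μ < δ i := by
  have hform : star x ⬝ᵥ (diagonal δ - T) *ᵥ x = ∑ i, (δ i - μ) * x i ^ 2 := by
    simp only [sub_mulVec, hTx, mulVec_diagonal, star_trivial, dotProduct, Pi.sub_apply,
      Pi.smul_apply, smul_eq_mul]
    exact Finset.sum_congr rfl fun i _ => by ring
  have hpos := hform ▸ hpd.dotProduct_mulVec_pos hx
  by_contra! h
  exact hpos.not_ge (Finset.sum_nonpos fun i _ => mul_nonpos_of_nonpos_of_nonneg
    (sub_nonpos.mpr (h i)) (sq_nonneg _))

theorem diagonal_mul_mul_diagonal_sqrt {β : ι → ℝ} (hβ : ∀ i, 0 ≤ β i) (A : Matrix ι ι ℝ) :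
    diagonal β * A * diagonal (fun i => √(β i)) = diagonal (fun i => √(β i)) *
      (diagonal (fun i => √(β i)) * A * diagonal (fun i => √(β i))) := by
  simp only [← Matrix.mul_assoc, diagonal_mul_diagonal, Real.mul_self_sqrt (hβ _)]

end Matrix

theorem eig_BA_lt_max_delta_general (N : ℕ) (hN : 0 < N)
    (A : Matrix (Fin N) (Fin N) ℝ) (hAsymm : A.IsSymm)
    (β δ : Fin N → ℝ) (hβ : ∀ i, 0 < β i)
    (hstab : ∀ μ : ℝ, (∃ v : Fin N → ℝ, v ≠ 0 ∧
      (Matrix.diagonal β * A - Matrix.diagonal δ).mulVec v = μ • v) → μ < 0) :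
    ∀ μ : ℝ, (∃ v : Fin N → ℝ, v ≠ 0 ∧ (Matrix.diagonal β * A).mulVec v = μ • v) →
      μ < Finset.univ.sup' (Finset.univ_nonempty_iff.mpr ⟨⟨0, hN⟩⟩) δ := by
  intro μ hμ
  set s : Fin N → ℝ := fun i => √(β i)
  have hs : IsUnit (diagonal s) :=
    isUnit_diagonal.mpr (Pi.isUnit_iff.mpr fun i => (Real.sqrt_pos.mpr (hβ i)).ne'.isUnit)
  have hBA := diagonal_mul_mul_diagonal_sqrt (fun i => (hβ i).le) A
  have hBAD : (diagonal β * A - diagonal δ) * diagonal s =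
      diagonal s * (diagonal s * A * diagonal s - diagonal δ) := by
    rw [sub_mul, mul_sub, hBA, (commute_diagonal δ s).eq]
  have hT : (diagonal s * A * diagonal s).IsHermitian := by
    have h := isHermitian_conjTranspose_mul_mul (diagonal s) (isHermitian_iff_isSymm.mpr hAsymm)
    rwa [(isHermitian_diagonal s).eq] at h
  have hpd : (diagonal δ - diagonal s * A * diagonal s).PosDef := by
    rw [← neg_sub]
    exact (hT.sub (isHermitian_diagonal δ)).posDef_neg_of_eigenvalues_neg fun ν hν =>
      hstab ν ((exists_eigenvector_iff_of_mul_eq_mul hs hBAD ν).mpr hν)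
  obtain ⟨x, hx, hTx⟩ := (exists_eigenvector_iff_of_mul_eq_mul hs hBA μ).mp hμ
  obtain ⟨i, hi⟩ := exists_lt_of_posDef_diagonal_sub hpd hx hTx
  exact hi.trans_le (Finset.le_sup' δ (Finset.mem_univ i))

/-- if every real eigenvalue of BA − D is negative, then every real
eigenvalue of BA is less than max_i δ_i (spectra of BA−D and BA are real). -/
theorem eig_BA_lt_max_delta (N : ℕ) (hN : 0 < N)
    (A : Matrix (Fin N) (Fin N) ℝ) (hAsymm : A.IsSymm)
    (hA01 : ∀ i j, A i j = 0 ∨ A i j = 1)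
    (β δ : Fin N → ℝ) (hβ : ∀ i, 0 < β i) (hδ : ∀ i, 0 < δ i)
    (hstab : ∀ μ : ℝ, (∃ v : Fin N → ℝ, v ≠ 0 ∧
      (Matrix.diagonal β * A - Matrix.diagonal δ).mulVec v = μ • v) → μ < 0) :
    ∀ μ : ℝ, (∃ v : Fin N → ℝ, v ≠ 0 ∧ (Matrix.diagonal β * A).mulVec v = μ • v) →
      μ < Finset.univ.sup' (Finset.univ_nonempty_iff.mpr ⟨⟨0, hN⟩⟩) δ :=
  eig_BA_lt_max_delta_general N hN A hAsymm β δ hβ hstab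
end

section
/- Let A be the adjacency matrix of a connected graph, β_i, δ_i > 0, and suppose λ_max(BA − D) < 0. If x̃ ∈ [0,1]^N and B̃ = diag((1−x̃_i)β_i), then every eigenvalue of B̃A − D has negative real part; i.e., the linearized system ẋ = (B̃A − D)x is asymptotically stable. -/
/-!
Write `P = A - B⁻¹D`, so that `BA - D = BP` with `P` symmetric. Conjugating by `B^{1/2}` shows
that `BP` has the same spectrum as the symmetric matrix `B^{1/2} P B^{1/2}`, so the hypothesis makes
`P` negative definite. If `(B̃A - D) v = μ v` with `v ≠ 0`, weighting by `B⁻¹` gives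
`Re μ · ∑ |vᵢ|² / βᵢ = Re (v* B⁻¹(B̃A - D) v) ≤ |v|ᵀ P |v| < 0`, where the middle inequality
uses `A ≥ 0` and `0 ≤ 1 - x̃ᵢ ≤ 1`.
-/

open Matrix

theorem spectrum.units_mul_comm {R A : Type*} [CommSemiring R] [Ring A] [Algebra R A]
    (u : Aˣ) (a : A) : spectrum R (u * a) = spectrum R (a * u) := by
  simpa [mul_assoc] using (spectrum.units_conjugate' (R := R) (a := ↑u * a) (u := u)).symm

namespace Matrix

variable {n : Type*} [Fintype n]

theorem re_star_dotProduct_mulVec_le {K L : Matrix n n ℝ} (hdiag : ∀ i, K i i ≤ L i i)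
    (hoff : ∀ i j, i ≠ j → |K i j| ≤ L i j) (v : n → ℂ) :
    (star v ⬝ᵥ K.map Complex.ofReal *ᵥ v).re ≤ (fun i => ‖v i‖) ⬝ᵥ L *ᵥ fun i => ‖v i‖ := by
  simp only [dotProduct, mulVec, Pi.star_apply, Finset.mul_sum, Complex.re_sum]
  refine Finset.sum_le_sum fun i _ => Finset.sum_le_sum fun j _ => ?_
  have hre : (star (v i) * (K.map Complex.ofReal i j * v j)).re =
      K i j * (star (v i) * v j).re := by
    rw [map_apply, mul_left_comm, Complex.re_ofReal_mul]
  rw [hre]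
  obtain rfl | hij := eq_or_ne i j
  · have hnorm : (star (v i) * v i).re = ‖v i‖ * ‖v i‖ := by
      rw [Complex.star_def, mul_comm, Complex.mul_conj, Complex.normSq_eq_norm_sq, sq]
      rfl
    rw [hnorm]
    nlinarith [hdiag i, mul_self_nonneg ‖v i‖]
  · calc K i j * (star (v i) * v j).re ≤ |K i j| * (‖v i‖ * ‖v j‖) := by
          refine (le_abs_self _).trans ?_
          rw [abs_mul]
          gcongr
          refine (Complex.abs_re_le_norm _).trans ?_
          rw [norm_mul, norm_star]
      _ ≤ L i j * (‖v i‖ * ‖v j‖) := by gcongr; exact hoff i j hij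
      _ = ‖v i‖ * (L i j * ‖v j‖) := by ring

variable [DecidableEq n]

theorem mem_spectrum_iff_exists_mulVec_eq_smul {K : Type*} [Field K] {M : Matrix n n K} {μ : K} :
    μ ∈ spectrum K M ↔ ∃ v, v ≠ 0 ∧ M *ᵥ v = μ • v := by
  rw [← spectrum_toLin', ← Module.End.hasEigenvalue_iff_mem_spectrum,
    Module.End.hasEigenvalue_iff, Submodule.ne_bot_iff]
  simp only [Module.End.mem_eigenspace_iff, toLin'_apply, and_comm]

open scoped ComplexOrder in
theorem IsHermitian.posDef_neg_of_spectrum_neg {𝕜 : Type*} [RCLike 𝕜] {S : Matrix n n 𝕜}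
    (hS : S.IsHermitian) (h : ∀ μ ∈ spectrum ℝ S, μ < 0) : (-S).PosDef := by
  refine hS.neg.posDef_iff_eigenvalues_pos.mpr fun i => ?_
  have hmem := hS.neg.eigenvalues_mem_spectrum_real i
  rw [← spectrum.neg_eq, Set.mem_neg] at hmem
  linarith [h _ hmem]

theorem posDef_neg_of_spectrum_diagonal_mul_neg {P : Matrix n n ℝ} (hP : P.IsSymm) {β : n → ℝ}
    (hβ : ∀ i, 0 < β i) (h : ∀ μ ∈ spectrum ℝ (diagonal β * P), μ < 0) : (-P).PosDef := by
  set X : Matrix n n ℝ := diagonal fun i => √(β i)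
  have hX : IsUnit X := isUnit_diagonal.mpr <|
    Pi.isUnit_iff.mpr fun i => (Real.sqrt_pos.2 (hβ i)).ne'.isUnit
  have hXstar : star X = X := by simp [X, star_eq_conjTranspose]
  have hXX : X * X = diagonal β := by
    simp [X, diagonal_mul_diagonal, Real.mul_self_sqrt (hβ _).le]
  have hσ : spectrum ℝ (X * P * star X) = spectrum ℝ (diagonal β * P) := by
    obtain ⟨u, hu⟩ := hX
    rw [hXstar, ← hXX, ← hu, mul_assoc _ _ P, spectrum.units_mul_comm]
  have hS : (X * P * star X).IsHermitian := by
    simpa [star_eq_conjTranspose] using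
      isHermitian_conjTranspose_mul_mul Xᴴ (isHermitian_iff_isSymm.mpr hP)
  rw [← hX.posDef_star_right_conjugate_iff]
  simpa [mul_neg, neg_mul] using hS.posDef_neg_of_spectrum_neg (hσ ▸ h)

theorem re_neg_of_mem_spectrum_of_diagonal_mul {M : Matrix n n ℝ} {ω : n → ℝ}
    (hω : ∀ i, 0 < ω i)
    (h : ∀ v : n → ℂ, v ≠ 0 → (star v ⬝ᵥ (diagonal ω * M).map Complex.ofReal *ᵥ v).re < 0)
    {μ : ℂ} (hμ : μ ∈ spectrum ℂ (M.map Complex.ofReal)) : μ.re < 0 := by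
  obtain ⟨v, hv0, hv⟩ := mem_spectrum_iff_exists_mulVec_eq_smul.mp hμ
  obtain ⟨k, hk⟩ := Function.ne_iff.mp hv0
  set T : ℝ := ∑ i, ω i * Complex.normSq (v i)
  have hT : 0 < T := Finset.sum_pos' (fun i _ => mul_nonneg (hω i).le (Complex.normSq_nonneg _))
    ⟨k, Finset.mem_univ k, mul_pos (hω k) (Complex.normSq_pos.mpr hk)⟩
  have hmap : (diagonal ω * M).map Complex.ofReal =
      diagonal (fun i => (ω i : ℂ)) * M.map Complex.ofReal := by
    ext i j
    simp [diagonal_mul]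
  have hform : star v ⬝ᵥ (diagonal ω * M).map Complex.ofReal *ᵥ v = μ * T := by
    rw [hmap, ← mulVec_mulVec, hv, mulVec_smul, dotProduct_smul, smul_eq_mul]
    congr 1
    simp [T, dotProduct, mulVec_diagonal, Complex.normSq_eq_conj_mul_self, mul_left_comm]
  have hneg := h v hv0
  rw [hform, Complex.re_mul_ofReal] at hneg
  exact neg_of_mul_neg_left hneg hT.le

end Matrix

theorem linearized_sis_hurwitz_general (N : ℕ)
    (A : Matrix (Fin N) (Fin N) ℝ) (hAsymm : A.IsSymm)
    (hA01 : ∀ i j, A i j = 0 ∨ A i j = 1)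
    (β δ : Fin N → ℝ) (hβ : ∀ i, 0 < β i)
    (hstab : ∀ μ : ℝ, (∃ v : Fin N → ℝ, v ≠ 0 ∧
      (Matrix.diagonal β * A - Matrix.diagonal δ).mulVec v = μ • v) → μ < 0)
    (xt : Fin N → ℝ) (hxt : ∀ i, xt i ∈ Set.Icc (0:ℝ) 1) :
    ∀ μ ∈ spectrum ℂ
      ((Matrix.diagonal (fun i => (1 - xt i) * β i) * A
          - Matrix.diagonal δ).map (Complex.ofReal)),
      μ.re < 0 := by
  set P := A - diagonal (fun i => δ i / β i)
  have hβP : diagonal β * P = diagonal β * A - diagonal δ := by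
    simp [P, mul_sub, diagonal_mul_diagonal, mul_div_cancel₀ _ (hβ _).ne']
  have hP : (-P).PosDef := posDef_neg_of_spectrum_diagonal_mul_neg
    (hAsymm.sub (isSymm_diagonal _)) hβ fun μ hμ =>
      hstab μ (mem_spectrum_iff_exists_mulVec_eq_smul.mp (hβP ▸ hμ))
  have hA : ∀ i j, 0 ≤ A i j := fun i j => by rcases hA01 i j with h | h <;> simp [h]
  intro μ hμ
  refine re_neg_of_mem_spectrum_of_diagonal_mul (fun i => inv_pos.2 (hβ i))
    (fun v hv => ?_) hμ
  have hK : diagonal (fun i => (β i)⁻¹) * (diagonal (fun i => (1 - xt i) * β i) * A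
      - diagonal δ) = diagonal (fun i => 1 - xt i) * A - diagonal (fun i => δ i / β i) := by
    have hc : (fun i => (β i)⁻¹ * ((1 - xt i) * β i)) = fun i => 1 - xt i :=
      funext fun i => by field_simp [(hβ i).ne']
    have hd : (fun i => (β i)⁻¹ * δ i) = fun i => δ i / β i := funext fun i => inv_mul_eq_div _ _
    rw [mul_sub, ← mul_assoc, diagonal_mul_diagonal, diagonal_mul_diagonal, hc, hd]
  have hv' : (fun i => ‖v i‖) ≠ 0 := fun h => hv (funext fun i => norm_eq_zero.mp (congrFun h i))
  rw [hK]
  calc _ ≤ (fun i => ‖v i‖) ⬝ᵥ P *ᵥ fun i => ‖v i‖ :=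
        re_star_dotProduct_mulVec_le (fun i => ?_) (fun i j hij => ?_) v
    _ < 0 := by simpa [neg_mulVec] using hP.dotProduct_mulVec_pos hv'
  · simp only [P, Matrix.sub_apply, diagonal_mul, diagonal_apply_eq, tsub_le_iff_right, sub_add_cancel]
    nlinarith [hA i i, (hxt i).1]
  · simp only [P, Matrix.sub_apply, diagonal_mul, diagonal_apply_ne _ hij, sub_zero, abs_mul,
      abs_of_nonneg (sub_nonneg.2 (hxt i).2), abs_of_nonneg (hA i j)]
    nlinarith [hA i j, (hxt i).1, (hxt i).2]

/-- if λ_max(BA − D) < 0 and x̃ ∈ [0,1]^N, then B̃A − D (with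
B̃ = diag((1−x̃_i)β_i)) is Hurwitz: all its (complex) eigenvalues have negative
real part. -/
theorem linearized_sis_hurwitz (N : ℕ)
    (A : Matrix (Fin N) (Fin N) ℝ) (hAsymm : A.IsSymm)
    (hA01 : ∀ i j, A i j = 0 ∨ A i j = 1)
    (hconn : (SimpleGraph.fromRel (fun i j : Fin N => A i j = 1)).Connected)
    (β δ : Fin N → ℝ) (hβ : ∀ i, 0 < β i) (hδ : ∀ i, 0 < δ i)
    (hstab : ∀ μ : ℝ, (∃ v : Fin N → ℝ, v ≠ 0 ∧
      (Matrix.diagonal β * A - Matrix.diagonal δ).mulVec v = μ • v) → μ < 0)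
    (xt : Fin N → ℝ) (hxt : ∀ i, xt i ∈ Set.Icc (0:ℝ) 1) :
    ∀ μ ∈ spectrum ℂ
      ((Matrix.diagonal (fun i => (1 - xt i) * β i) * A
          - Matrix.diagonal δ).map (Complex.ofReal)),
      μ.re < 0 :=
  linearized_sis_hurwitz_general N A hAsymm hA01 β δ hβ hstab xt hxt
end
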